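/- For the heat semigroup (S_t) on ℝ, for every λ ∈ ℝ and T > 0 there is a constant C'(λ,T) > 0 such that inf_{t ∈ [0,T]} S_t φ_λ(x) ≥ C'(λ,T) φ_λ(x) for all x ∈ ℝ, where φ_λ(x) = e^{-λ|x|}. -/

import Mathlib

/-!
For `t > 0`, `S_t φ(x)` is the expectation of `φ` under the Gaussian law `N(x, t)`. The window
`|y - x| ≤ √t` has `N(x, t)`-probability `p = N(0, 1)([-1, 1]) > 0`, independent of `t` and `x`,
and on it `φ_λ(y) ≥ e^{-|λ|√t} φ_λ(x)`. Hence `S_t φ_λ ≥ p e^{-|λ|√T} φ_λ` for `0 < t ≤ T`,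
while `S_0 φ_λ = φ_λ`.
-/

open MeasureTheory Set

/-- The one-dimensional Gaussian heat kernel `p_t(x) = (2πt)^{-1/2} exp(-x²/(2t))`. -/
noncomputable def heatKernel (t x : ℝ) : ℝ :=
  (Real.sqrt (2 * Real.pi * t))⁻¹ * Real.exp (-(x ^ 2) / (2 * t))

/-- The heat semigroup `S_t φ(x) = ∫ p_t(x−y) φ(y) dy`, with `S_0 φ = φ`. -/
noncomputable def heatS (t : ℝ) (φ : ℝ → ℝ) (x : ℝ) : ℝ :=
  if t = 0 then φ x else ∫ y, heatKernel t (x - y) * φ y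

open ProbabilityTheory
open scoped NNReal

lemma heatKernel_sub_eq_gaussianPDFReal {t : ℝ} (ht : 0 ≤ t) (x y : ℝ) :
    heatKernel t (x - y) = gaussianPDFReal x t.toNNReal y := by
  rw [heatKernel, gaussianPDFReal, Real.coe_toNNReal t ht, ← neg_sub y x, neg_sq]

lemma heatS_eq_integral_gaussianReal {t : ℝ} (ht : 0 < t) (φ : ℝ → ℝ) (x : ℝ) :
    heatS t φ x = ∫ y, φ y ∂gaussianReal x t.toNNReal := by
  rw [heatS, if_neg ht.ne', integral_gaussianReal_eq_integral_smul (by simpa using ht)]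
  simp_rw [smul_eq_mul, heatKernel_sub_eq_gaussianPDFReal ht.le]

lemma gaussianReal_eq_map_standard (μ : ℝ) (v : ℝ≥0) :
    gaussianReal μ v = (gaussianReal 0 1).map (fun y => μ + √v * y) := by
  have hcomp : (fun y => μ + √v * y) = (μ + ·) ∘ (√v * ·) := rfl
  rw [hcomp, ← Measure.map_map (measurable_const_add μ) (measurable_const_mul _),
    gaussianReal_map_const_mul, gaussianReal_map_const_add]
  congr 1
  · simp
  · ext; simp

lemma gaussianReal_Icc_sub_sqrt_add_sqrt (μ : ℝ) {v : ℝ≥0} (hv : v ≠ 0) :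
    gaussianReal μ v (Icc (μ - √v) (μ + √v)) = gaussianReal 0 1 (Icc (-1) 1) := by
  have hsqrt : 0 < √(v : ℝ) := Real.sqrt_pos.mpr (by positivity)
  rw [gaussianReal_eq_map_standard, Measure.map_apply (by fun_prop) measurableSet_Icc]
  congr 1
  ext y
  simp only [mem_preimage, mem_Icc]
  constructor
  · rintro ⟨h1, h2⟩
    constructor <;> nlinarith
  · rintro ⟨h1, h2⟩
    constructor <;> nlinarith

lemma integrable_exp_mul_abs_gaussianReal (c μ : ℝ) (v : ℝ≥0) :
    Integrable (fun y => Real.exp (c * |y|)) (gaussianReal μ v) := by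
  refine (integrable_exp_abs_mul_abs (X := id) (t := c) (integrable_exp_mul_gaussianReal c)
    (integrable_exp_mul_gaussianReal (-c))).mono' (by fun_prop) (ae_of_all _ fun y => ?_)
  rw [Real.norm_of_nonneg (Real.exp_pos _).le]
  exact Real.exp_le_exp.mpr (mul_le_mul_of_nonneg_right (le_abs_self c) (abs_nonneg y))

lemma exp_neg_mul_abs_le_of_abs_sub_le {lam x y r : ℝ} (h : |y - x| ≤ r) :
    Real.exp (-(|lam| * r)) * Real.exp (-lam * |x|) ≤ Real.exp (-lam * |y|) := by
  rw [← Real.exp_add, Real.exp_le_exp]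
  have h1 : lam * (|y| - |x|) ≤ |lam| * r :=
    calc lam * (|y| - |x|) ≤ |lam| * |(|y| - |x|)| := by
          rw [← abs_mul]; exact le_abs_self _
      _ ≤ |lam| * r := by gcongr; exact (abs_abs_sub_abs_le_abs_sub y x).trans h
  linarith

lemma gaussianReal_real_Icc_pos (μ : ℝ) {v : ℝ≥0} (hv : v ≠ 0) {a b : ℝ} (hab : a < b) :
    0 < (gaussianReal μ v).real (Icc a b) := by
  refine ENNReal.toReal_pos (fun h => ?_) (measure_ne_top _ _)
  have := gaussianReal_absolutelyContinuous' μ hv h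
  simp at this
  linarith

lemma mul_measureReal_le_integral {α : Type*} [MeasurableSpace α] {μ : Measure α}
    [IsFiniteMeasure μ] {f : α → ℝ} {s : Set α} {c : ℝ} (hf_nonneg : 0 ≤ᵐ[μ] f)
    (hf : Integrable f μ) (hc : 0 ≤ c) (hs : ∀ x ∈ s, c ≤ f x) : c * μ.real s ≤ ∫ x, f x ∂μ :=
  (mul_le_mul_of_nonneg_left (measureReal_mono hs) hc).trans
    (mul_meas_ge_le_integral_of_nonneg hf_nonneg hf c)

lemma heatS_exp_neg_mul_abs_ge {t : ℝ} (ht : 0 < t) (lam x : ℝ) :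
    (gaussianReal 0 1).real (Icc (-1) 1) * Real.exp (-(|lam| * √t)) * Real.exp (-lam * |x|) ≤
      heatS t (fun y => Real.exp (-lam * |y|)) x := by
  have hv : t.toNNReal ≠ 0 := by simpa using ht
  have hwindow : (gaussianReal x t.toNNReal).real (Icc (x - √t) (x + √t)) =
      (gaussianReal 0 1).real (Icc (-1) 1) := by
    rw [measureReal_def, measureReal_def, ← gaussianReal_Icc_sub_sqrt_add_sqrt x hv,
      Real.coe_toNNReal _ ht.le]
  rw [heatS_eq_integral_gaussianReal ht, ← hwindow, mul_assoc, mul_comm]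
  refine mul_measureReal_le_integral (ae_of_all _ fun y => (Real.exp_pos _).le)
    (integrable_exp_mul_abs_gaussianReal _ _ _) (by positivity)
    fun y hy => exp_neg_mul_abs_le_of_abs_sub_le ?_
  rw [abs_le]
  constructor <;> linarith [hy.1, hy.2]

theorem heatS_exp_lower_bound_general (lam T : ℝ) :
    ∃ C' : ℝ, 0 < C' ∧ ∀ t ∈ Icc (0 : ℝ) T, ∀ x : ℝ,
      C' * Real.exp (-lam * |x|) ≤ heatS t (fun y => Real.exp (-lam * |y|)) x := by
  set p := (gaussianReal 0 1).real (Icc (-1) 1)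
  have hp : 0 < p := gaussianReal_real_Icc_pos 0 one_ne_zero (by norm_num)
  refine ⟨min 1 (p * Real.exp (-(|lam| * √T))), by positivity, ?_⟩
  rintro t ⟨ht0, htT⟩ x
  rcases ht0.eq_or_lt with rfl | ht
  · rw [heatS, if_pos rfl]
    exact mul_le_of_le_one_left (Real.exp_pos _).le (min_le_left _ _)
  · refine le_trans ?_ (heatS_exp_neg_mul_abs_ge ht lam x)
    gcongr
    exact (min_le_right _ _).trans (by gcongr)

/-- Lower bound for the heat semigroup on exponentials: for all `λ ∈ ℝ` and `T > 0` there is a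
constant `C'(λ,T) > 0` with `S_t φ_λ(x) ≥ C' φ_λ(x)` for all `t ∈ [0,T]`, `x ∈ ℝ`, where
`φ_λ(x) = e^{-λ|x|}`. -/
theorem heatS_exp_lower_bound (lam T : ℝ) (hT : 0 < T) :
    ∃ C' : ℝ, 0 < C' ∧ ∀ t ∈ Icc (0 : ℝ) T, ∀ x : ℝ,
      C' * Real.exp (-lam * |x|) ≤ heatS t (fun y => Real.exp (-lam * |y|)) x :=
  heatS_exp_lower_bound_general lam T
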